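/- One-sided Death Leaps Principle: If X is a Toads and Frogs position in which every legal move of Left (the Toad player) is a jump, and X contains no two consecutive empty squares, then the game value of X is ≤ 0. -/

import Mathlib

universe u

namespace SetTheory

/-- Pre-games, as in Mathlib before they were removed (Mathlib's old `SetTheory.PGame`). -/
inductive PGame : Type (u + 1)
  | mk : ∀ α β : Type u, (α → PGame) → (β → PGame) → PGame

namespace PGame

instance : Zero PGame := ⟨⟨PEmpty, PEmpty, PEmpty.elim, PEmpty.elim⟩⟩

/-- Negation of a pre-game: swap the roles of Left and Right. -/
def neg : PGame → PGame
  | ⟨l, r, L, R⟩ => ⟨r, l, fun i => neg (R i), fun i => neg (L i)⟩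

instance : Neg PGame := ⟨neg⟩

/-- `leAux x y = (x ≤ y, y ≤ x)`, by nested structural recursion; `x ≤ y` iff no Left
option `xL i` satisfies `y ≤ xL i` and no Right option `yR j` satisfies `yR j ≤ x`. -/
noncomputable def leAux : PGame → PGame → Prop × Prop :=
  fun x => PGame.rec (motive := fun _ => PGame → Prop × Prop)
    (fun xl xr xL xR IHl IHr y => PGame.rec (motive := fun _ => Prop × Prop)
      (fun yl yr yL yR IHyl IHyr =>
        ((∀ i, ¬ (IHl i (mk yl yr yL yR)).2) ∧ ∀ j, ¬ (IHyr j).2,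
         (∀ i, ¬ (IHyl i).1) ∧ ∀ j, ¬ (IHr j (mk yl yr yL yR)).1)) y) x

noncomputable instance : LE PGame := ⟨fun x y => (leAux x y).1⟩

end PGame

end SetTheory

open SetTheory

inductive Cell : Type
  | T | F | E
deriving DecidableEq

/-- Positions reachable from `l` by a single Toad (Left) move:
a Toad steps right into an empty square, or jumps over one adjacent Frog
into the empty square beyond. -/
def toadMoves : List Cell → List (List Cell)
  | [] => []
  | c :: rest =>
    (match c, rest with
     | Cell.T, Cell.E :: r => [Cell.E :: Cell.T :: r]
     | Cell.T, Cell.F :: Cell.E :: r => [Cell.E :: Cell.F :: Cell.T :: r]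
     | _, _ => []) ++ (toadMoves rest).map (c :: ·)

/-- Positions reachable from `l` by a single Frog (Right) move. -/
def frogMoves : List Cell → List (List Cell)
  | [] => []
  | c :: rest =>
    (match c, rest with
     | Cell.E, Cell.F :: r => [Cell.F :: Cell.E :: r]
     | Cell.E, Cell.T :: Cell.F :: r => [Cell.F :: Cell.T :: Cell.E :: r]
     | _, _ => []) ++ (frogMoves rest).map (c :: ·)

/-- A weight which strictly decreases with every legal move: each Toad
contributes the number of squares strictly to its right, each Frog the number
of squares strictly to its left. -/
def wt : List Cell → ℕ
  | [] => 0
  | c :: rest =>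
    (if c = Cell.T then rest.length else 0) + rest.countP (· = Cell.F) + wt rest

/-- Game tree with fuel; since `wt` strictly decreases along moves and
positions of weight `0` have no moves, `gameAux n l` is the true game
tree of `l` whenever `wt l ≤ n`. -/
def gameAux : ℕ → List Cell → PGame
  | 0, _ => 0
  | n + 1, l =>
    PGame.mk {m // m ∈ toadMoves l} {m // m ∈ frogMoves l}
      (fun m => gameAux n m.1) (fun m => gameAux n m.1)

/-- The game (PGame) associated to a Toads and Frogs position. -/
def tfGame (l : List Cell) : PGame := gameAux (wt l + 1) l

/-- The game `{x | y}` with a single Left option `x` and single Right option `y`. -/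
def gmk (x y : PGame) : PGame :=
  PGame.mk PUnit PUnit (fun _ => x) (fun _ => y)

/-- The canonical game of a natural number. -/
def natGame : ℕ → PGame
  | 0 => 0
  | n + 1 => PGame.mk PUnit PEmpty (fun _ => natGame n) (fun x => x.elim)

/-- The canonical game of an integer. -/
def intGame : ℤ → PGame
  | Int.ofNat n => natGame n
  | Int.negSucc n => -natGame (n + 1)

/-- `(TF)^b` : the block `TF` repeated `b` times. -/
def tfBlock (b : ℕ) : List Cell := (List.replicate b [Cell.T, Cell.F]).flatten

/-!
Right wins moving second by undoing half of every Toad jump: after Left plays `TFE → EFT`,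
Right slides the jumped Frog back, reaching `FET`. The two hypotheses together say that every
empty square except possibly the first one is immediately preceded by a Frog. This invariant
forbids Toad slides, so every Left move is such a jump, and Right's reply restores it. Each
round lowers the weight `wt` by 3, so induction on the weight shows Left eventually runs out of
moves.
-/

universe v

namespace SetTheory.PGame

theorem leAux_mk_mk {xl xr : Type u} {yl yr : Type v} (xL : xl → PGame) (xR : xr → PGame)
    (yL : yl → PGame) (yR : yr → PGame) :
    leAux (mk xl xr xL xR) (mk yl yr yL yR) =
      ((∀ i, ¬ (leAux (xL i) (mk yl yr yL yR)).2) ∧ ∀ j, ¬ (leAux (mk xl xr xL xR) (yR j)).2,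
       (∀ i, ¬ (leAux (mk xl xr xL xR) (yL i)).1) ∧ ∀ j, ¬ (leAux (xR j) (mk yl yr yL yR)).1) :=
  rfl

theorem leAux_swap (x y : PGame) :
    ((leAux x y).2 ↔ (leAux y x).1) ∧ ((leAux y x).2 ↔ (leAux x y).1) := by
  induction x generalizing y with
  | mk xl xr xL xR ihxL ihxR =>
    induction y with
    | mk yl yr yL yR ihyL ihyR =>
      rw [leAux_mk_mk, leAux_mk_mk]
      simp only [(ihyL _).2, (ihxR _ _).2, (ihyR _).1, (ihxL _ _).1, iff_self, and_self]

theorem leAux_snd_iff (x y : PGame.{u}) : (leAux x y).2 ↔ y ≤ x := (leAux_swap x y).1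

theorem mk_le_zero {α β : Type u} {L : α → PGame.{u}} {R : β → PGame.{u}} :
    mk α β L R ≤ 0 ↔ ∀ i, ¬ 0 ≤ L i := by
  change ((∀ i, ¬ (leAux (L i) 0).2) ∧ ∀ j : PEmpty, _) ↔ _
  simp only [leAux_snd_iff, IsEmpty.forall_iff, and_true]

theorem zero_le_mk {α β : Type u} {L : α → PGame.{u}} {R : β → PGame.{u}} :
    0 ≤ mk α β L R ↔ ∀ j, ¬ R j ≤ 0 := by
  change ((∀ i : PEmpty, _) ∧ ∀ j, ¬ (leAux 0 (R j)).2) ↔ _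
  simp only [leAux_snd_iff, IsEmpty.forall_iff, true_and]

end SetTheory.PGame

theorem List.isChain_iff_forall_pair_infix {α : Type*} {R : α → α → Prop} {l : List α} :
    l.IsChain R ↔ ∀ x y, [x, y] <:+: l → R x y :=
  ⟨fun h _ _ hxy => List.isChain_pair.1 (h.infix hxy),
    fun h => (List.isChain_isInfix l).imp h⟩

open Cell

theorem wt_append (a b : List Cell) :
    wt (a ++ b) = wt a + wt b + a.countP (· = T) * b.length + a.length * b.countP (· = F) := by
  induction a with
  | nil => simp [wt]
  | cons c a ih => grind [wt]

theorem wt_jump_slide (a b : List Cell) :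
    wt (a ++ T :: F :: E :: b) = wt (a ++ F :: E :: T :: b) + 3 := by
  grind [wt_append, wt]

theorem exists_of_mem_toadMoves {l m : List Cell} (h : m ∈ toadMoves l) :
    ∃ a b, (l = a ++ T :: E :: b ∧ m = a ++ E :: T :: b) ∨
      (l = a ++ T :: F :: E :: b ∧ m = a ++ E :: F :: T :: b) := by
  induction l generalizing m with
  | nil => simp [toadMoves] at h
  | cons c l ih =>
    simp only [toadMoves, List.mem_append, List.mem_map] at h
    rcases h with h | ⟨m, hm, rfl⟩
    · split at h <;> simp only [List.mem_singleton, List.not_mem_nil] at h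
      · exact ⟨[], _, .inl ⟨rfl, h⟩⟩
      · exact ⟨[], _, .inr ⟨rfl, h⟩⟩
    · obtain ⟨a, b, ⟨rfl, rfl⟩ | ⟨rfl, rfl⟩⟩ := ih hm
      exacts [⟨c :: a, b, .inl ⟨rfl, rfl⟩⟩, ⟨c :: a, b, .inr ⟨rfl, rfl⟩⟩]

theorem append_slide_mem_frogMoves (a b : List Cell) :
    a ++ F :: E :: b ∈ frogMoves (a ++ E :: F :: b) := by
  induction a with
  | nil => simp [frogMoves]
  | cons c a ih => exact List.mem_append_right _ (List.mem_map_of_mem ih)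

def FrogBeforeEmpty (l : List Cell) : Prop :=
  l.IsChain fun x y => y = E → x = F

theorem frogBeforeEmpty_iff {l : List Cell} :
    FrogBeforeEmpty l ↔ ¬ [T, E] <:+: l ∧ ¬ [E, E] <:+: l := by
  constructor
  · intro h
    exact ⟨fun hTE => Cell.noConfusion (List.isChain_iff_forall_pair_infix.1 h _ _ hTE rfl),
      fun hEE => Cell.noConfusion (List.isChain_iff_forall_pair_infix.1 h _ _ hEE rfl)⟩
  · rintro ⟨hTE, hEE⟩
    refine List.isChain_iff_forall_pair_infix.2 fun x y hxy hy => ?_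
    subst hy
    cases x
    exacts [absurd hxy hTE, rfl, absurd hxy hEE]

theorem FrogBeforeEmpty.exists_jump {l m : List Cell} (hl : FrogBeforeEmpty l)
    (hm : m ∈ toadMoves l) : ∃ a b, l = a ++ T :: F :: E :: b ∧ m = a ++ E :: F :: T :: b := by
  obtain ⟨a, b, ⟨rfl, -⟩ | jump⟩ := exists_of_mem_toadMoves hm
  · nomatch (List.isChain_append_cons_cons.1 hl).2.1 rfl
  · exact ⟨a, b, jump⟩

/-- The square after the old `E` was not empty, so the `T` now in front of it does no harm. -/
theorem FrogBeforeEmpty.slide_back {a b : List Cell}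
    (h : FrogBeforeEmpty (a ++ T :: F :: E :: b)) : FrogBeforeEmpty (a ++ F :: E :: T :: b) := by
  simp_all [FrogBeforeEmpty, List.isChain_append, List.isChain_cons]

/-- The fuel bound keeps Right's options in the truncated tree after Left's jump. -/
theorem gameAux_le_zero (n : ℕ) (l : List Cell) (hn : wt l ≤ n) (hl : FrogBeforeEmpty l) :
    gameAux n l ≤ 0 := by
  induction n using Nat.strong_induction_on generalizing l with
  | _ n ih =>
    rcases n with _ | n
    · exact PGame.mk_le_zero.2 fun i => i.elim
    refine PGame.mk_le_zero.2 fun ⟨m, hm⟩ => ?_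
    obtain ⟨a, b, rfl, rfl⟩ := hl.exists_jump hm
    have hw := wt_jump_slide a b
    obtain ⟨k, rfl⟩ : ∃ k, n = k + 1 := ⟨n - 1, by omega⟩
    exact PGame.zero_le_mk.not.2 <| not_forall_not.2
      ⟨⟨_, append_slide_mem_frogMoves a (T :: b)⟩,
        ih k (by omega) (a ++ F :: E :: T :: b) (by omega) hl.slide_back⟩

/-- **One-sided Death Leaps Principle**: if every legal Left (Toad) move in `X`
is a jump and `X` has no two consecutive empty squares, then `X ≤ 0`. -/
theorem one_sided_death_leaps_principle (X : List Cell)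
    (hT : ¬ [Cell.T, Cell.E] <:+: X)
    (hE : ¬ [Cell.E, Cell.E] <:+: X) :
    tfGame X ≤ 0 :=
  gameAux_le_zero _ X (Nat.le_succ _) (frogBeforeEmpty_iff.2 ⟨hT, hE⟩)
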